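/- arXiv:2210.01740 — 2 statements merged into one kernel-verified Lean document; each statement's English description precedes it below -/
import Mathlib

section
/- Let f:(t₀-ε, t₀+ε) → ℝ be a smooth function with f(t₀)=0, f'(t₀)=0, and f''(t₀) = -2a < 0. For small c>0 let t₁(c) < t₀ < t₂(c) be the two zeros of f(t)+c nearest t₀, with f(t)+c > 0 on (t₁(c), t₂(c)). Then lim_{c→0⁺} ∫_{t₁(c)}^{t₂(c)} dt/√(f(t)+c) = π/√a. -/
set_option maxHeartbeats 1000000
open Real Filter Set Topology intervalIntegral
open MeasureTheory

lemma aux_meas : Measurable (fun x : ℝ => 1 / Real.sqrt x) := by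
  exact measurable_const.div Real.continuous_sqrt.measurable

lemma aux_ii_one_sub_sq :
    IntervalIntegrable (fun x : ℝ => 1 / Real.sqrt (1 - x ^ 2)) volume (-1) 1 := by
  have h0 : IntervalIntegrable (fun x : ℝ => x ^ (-(1/2) : ℝ)) volume 0 1 :=
    intervalIntegrable_rpow' (by norm_num)
  have h1 : IntervalIntegrable (fun x : ℝ => (1 - x) ^ (-(1/2) : ℝ)) volume 0 1 := by
    simpa using (h0.comp_sub_left 1).symm
  have h2 : IntervalIntegrable (fun x : ℝ => 1 / Real.sqrt (1 - x ^ 2)) volume 0 1 := by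
    refine h1.mono_fun ((aux_meas.comp (measurable_const.sub (measurable_id.pow_const 2))).aestronglyMeasurable) ?_
    filter_upwards [MeasureTheory.ae_restrict_mem measurableSet_uIoc] with x hx
    rw [uIoc_of_le (by norm_num : (0:ℝ) ≤ 1)] at hx
    obtain ⟨hx0, hx1⟩ := hx
    have h1x : (0:ℝ) ≤ 1 - x := by linarith
    have key : (1 - x) ^ (-(1/2) : ℝ) = 1 / Real.sqrt (1 - x) := by
      rw [Real.rpow_neg h1x, Real.sqrt_eq_rpow, one_div]
      norm_num
    rw [Real.norm_eq_abs, Real.norm_eq_abs, key]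
    rw [abs_of_nonneg (by positivity), abs_of_nonneg (by positivity)]
    rcases eq_or_lt_of_le hx1 with h|h
    · subst h; simp
    apply one_div_le_one_div_of_le
    · exact Real.sqrt_pos.2 (by nlinarith)
    · rw [show (1:ℝ) - x ^ 2 = (1 - x) * (1 + x) by ring]
      rw [Real.sqrt_mul h1x]
      nlinarith [Real.sqrt_nonneg (1 - x), Real.sqrt_nonneg (1 + x),
        Real.sq_sqrt h1x, Real.sq_sqrt (by linarith : (0:ℝ) ≤ 1 + x),
        Real.sqrt_le_sqrt (by linarith : (1:ℝ) ≤ 1 + x), Real.sqrt_one]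
  have h3 : IntervalIntegrable (fun x : ℝ => 1 / Real.sqrt (1 - x ^ 2)) volume (-1) 0 := by
    have h4 := (h2.comp_mul_left (c := -1)).symm
    norm_num at h4
    convert h4 using 2 with x
    ring_nf
  exact h3.trans h2

lemma aux_integral_one_sub_sq :
    ∫ x in (-1:ℝ)..1, 1 / Real.sqrt (1 - x ^ 2) = π := by
  have h := intervalIntegral.integral_eq_sub_of_hasDerivAt_of_tendsto
    (f := Real.arcsin) (f' := fun x => 1 / Real.sqrt (1 - x ^ 2))
    (a := (-1:ℝ)) (b := 1) (by norm_num)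
    (fun x hx => Real.hasDerivAt_arcsin (ne_of_gt hx.1) (ne_of_lt hx.2))
    aux_ii_one_sub_sq
    ((Real.continuous_arcsin.tendsto (-1)).mono_left nhdsWithin_le_nhds)
    ((Real.continuous_arcsin.tendsto 1).mono_left nhdsWithin_le_nhds)
  rw [h, Real.arcsin_one, Real.arcsin_neg_one]
  ring

lemma aux_ptwise {β : ℝ} (hβ : 0 < β) (s : ℝ) :
    1 / Real.sqrt (1 - (s / β) ^ 2) = β * (1 / Real.sqrt (β ^ 2 - s ^ 2)) := by
  have h1 : β ^ 2 - s ^ 2 = β ^ 2 * (1 - (s / β) ^ 2) := by field_simp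
  rw [h1, Real.sqrt_mul (sq_nonneg β), Real.sqrt_sq hβ.le]
  rcases le_or_gt (1 - (s / β) ^ 2) 0 with h | h
  · rw [Real.sqrt_eq_zero_of_nonpos h]; simp
  · field_simp

lemma aux_ii_beta {β : ℝ} (hβ : 0 < β) :
    IntervalIntegrable (fun s : ℝ => 1 / Real.sqrt (β ^ 2 - s ^ 2)) volume (-β) β := by
  have h := (aux_ii_one_sub_sq.comp_mul_left (c := β⁻¹)).smul β⁻¹
  have e1 : (-1)/β⁻¹ = -β := by field_simp
  have e2 : (1:ℝ)/β⁻¹ = β := by field_simp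
  have hfun : (β⁻¹ • fun x : ℝ => 1 / Real.sqrt (1 - (β⁻¹ * x) ^ 2))
      = fun s : ℝ => 1 / Real.sqrt (β ^ 2 - s ^ 2) := by
    funext s
    have : β⁻¹ * s = s / β := by ring
    simp only [Pi.smul_apply, smul_eq_mul, this, aux_ptwise hβ s]
    field_simp
  rwa [hfun, e1, e2] at h

lemma aux_integral_beta {β : ℝ} (hβ : 0 < β) :
    ∫ s in (-β)..β, 1 / Real.sqrt (β ^ 2 - s ^ 2) = π := by
  have h : ∀ s : ℝ, 1 / Real.sqrt (β ^ 2 - s ^ 2)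
      = β⁻¹ • (1 / Real.sqrt (1 - (s / β) ^ 2)) := by
    intro s; rw [aux_ptwise hβ s, smul_eq_mul]; field_simp
  simp_rw [h]
  rw [intervalIntegral.integral_smul, intervalIntegral.integral_comp_div (f := fun x => 1 / Real.sqrt (1 - x ^ 2)) hβ.ne']
  rw [neg_div, div_self hβ.ne', aux_integral_one_sub_sq]
  rw [smul_eq_mul, smul_eq_mul]
  field_simp

lemma aux_ii_right {β : ℝ} (hβ : 0 < β) :
    IntervalIntegrable (fun s : ℝ => 1 / Real.sqrt (β ^ 2 - s ^ 2)) volume 0 β :=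
  (aux_ii_beta hβ).mono_set (by
    rw [uIcc_of_le hβ.le, uIcc_of_le (by linarith)]
    exact Icc_subset_Icc (by linarith) le_rfl)

lemma aux_ii_left {β : ℝ} (hβ : 0 < β) :
    IntervalIntegrable (fun s : ℝ => 1 / Real.sqrt (β ^ 2 - s ^ 2)) volume (-β) 0 :=
  (aux_ii_beta hβ).mono_set (by
    rw [uIcc_of_le (by linarith : -β ≤ (0:ℝ)), uIcc_of_le (by linarith)]
    exact Icc_subset_Icc le_rfl (by linarith))

lemma aux_int_lr {β : ℝ} (hβ : 0 < β) :
    ∫ s in (-β : ℝ)..0, 1 / Real.sqrt (β ^ 2 - s ^ 2)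
      = ∫ s in (0:ℝ)..β, 1 / Real.sqrt (β ^ 2 - s ^ 2) := by
  have h := intervalIntegral.integral_comp_neg (a := (0:ℝ)) (b := β)
    (fun s : ℝ => 1 / Real.sqrt (β ^ 2 - s ^ 2))
  simp only [neg_zero] at h
  rw [← h]
  simp [neg_sq]

lemma aux_int_half {β : ℝ} (hβ : 0 < β) :
    ∫ s in (0:ℝ)..β, 1 / Real.sqrt (β ^ 2 - s ^ 2) = π / 2 := by
  have hadd := intervalIntegral.integral_add_adjacent_intervals
    (aux_ii_left hβ) (aux_ii_right hβ)
  rw [aux_integral_beta hβ, aux_int_lr hβ] at hadd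
  linarith

lemma aux_k_ptwise {k : ℝ} (y : ℝ) (hk : 0 ≤ k) :
    1 / Real.sqrt (k * y) = (Real.sqrt k)⁻¹ * (1 / Real.sqrt y) := by
  rw [Real.sqrt_mul hk, one_div, mul_inv, one_div]

lemma aux_int_right_scaled {k β : ℝ} (hk : 0 < k) (hβ : 0 < β) (t₀ : ℝ) :
    ∫ t in t₀..(t₀ + β), 1 / Real.sqrt (k * (β ^ 2 - (t - t₀) ^ 2))
      = π / (2 * Real.sqrt k) := by
  simp_rw [aux_k_ptwise _ hk.le]
  rw [intervalIntegral.integral_const_mul]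
  rw [intervalIntegral.integral_comp_sub_right
    (f := fun s : ℝ => 1 / Real.sqrt (β ^ 2 - s ^ 2)) t₀]
  simp only [sub_self, add_sub_cancel_left]
  rw [aux_int_half hβ, inv_mul_eq_div, div_div]

lemma aux_int_left_scaled {k β : ℝ} (hk : 0 < k) (hβ : 0 < β) (t₀ : ℝ) :
    ∫ t in (t₀ - β)..t₀, 1 / Real.sqrt (k * (β ^ 2 - (t - t₀) ^ 2))
      = π / (2 * Real.sqrt k) := by
  simp_rw [aux_k_ptwise _ hk.le]
  rw [intervalIntegral.integral_const_mul]
  rw [intervalIntegral.integral_comp_sub_right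
    (f := fun s : ℝ => 1 / Real.sqrt (β ^ 2 - s ^ 2)) t₀]
  simp only [sub_self, sub_sub_cancel_left]
  rw [aux_int_lr hβ, aux_int_half hβ, inv_mul_eq_div, div_div]

lemma aux_ii_right_scaled {k β : ℝ} (hk : 0 < k) (hβ : 0 < β) (t₀ : ℝ) :
    IntervalIntegrable (fun t : ℝ => 1 / Real.sqrt (k * (β ^ 2 - (t - t₀) ^ 2)))
      volume t₀ (t₀ + β) := by
  have h := ((aux_ii_right hβ).comp_sub_right t₀).const_mul (Real.sqrt k)⁻¹
  simp only [zero_add] at h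
  rw [add_comm β t₀] at h
  refine h.congr_ae (Eventually.of_forall fun t => ?_)
  exact (aux_k_ptwise _ hk.le).symm

lemma aux_ii_left_scaled {k β : ℝ} (hk : 0 < k) (hβ : 0 < β) (t₀ : ℝ) :
    IntervalIntegrable (fun t : ℝ => 1 / Real.sqrt (k * (β ^ 2 - (t - t₀) ^ 2)))
      volume (t₀ - β) t₀ := by
  have h := ((aux_ii_left hβ).comp_sub_right t₀).const_mul (Real.sqrt k)⁻¹
  simp only [zero_add] at h
  rw [show -β + t₀ = t₀ - β by ring] at h
  refine h.congr_ae (Eventually.of_forall fun t => ?_)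
  exact (aux_k_ptwise _ hk.le).symm

lemma aux_anti {g g' : ℝ → ℝ} {D : Set ℝ} (hD : Convex ℝ D)
    (hg : ∀ t ∈ D, HasDerivAt g (g' t) t) (h0 : ∀ t ∈ D, g' t ≤ 0) : AntitoneOn g D := by
  refine antitoneOn_of_deriv_nonpos hD
    (fun t ht => (hg t ht).continuousAt.continuousWithinAt)
    (fun t ht => (hg t (interior_subset ht)).differentiableAt.differentiableWithinAt)
    (fun t ht => ?_)
  rw [(hg t (interior_subset ht)).deriv]
  exact h0 t (interior_subset ht)

lemma aux_mono {g g' : ℝ → ℝ} {D : Set ℝ} (hD : Convex ℝ D)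
    (hg : ∀ t ∈ D, HasDerivAt g (g' t) t) (h0 : ∀ t ∈ D, 0 ≤ g' t) : MonotoneOn g D := by
  refine monotoneOn_of_deriv_nonneg hD
    (fun t ht => (hg t ht).continuousAt.continuousWithinAt)
    (fun t ht => (hg t (interior_subset ht)).differentiableAt.differentiableWithinAt)
    (fun t ht => ?_)
  rw [(hg t (interior_subset ht)).deriv]
  exact h0 t (interior_subset ht)

theorem limit_period_integral
    (f : ℝ → ℝ) (t₀ ε a : ℝ) (hε : 0 < ε) (ha : 0 < a)
    (hf : ContDiffOn ℝ (⊤ : ℕ∞) f (Ioo (t₀ - ε) (t₀ + ε)))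
    (hf0 : f t₀ = 0) (hf1 : deriv f t₀ = 0) (hf2 : deriv (deriv f) t₀ = -2 * a)
    (t₁ t₂ : ℝ → ℝ)
    (hzeros : ∀ᶠ c in 𝓝[>] (0 : ℝ),
      t₁ c < t₀ ∧ t₀ < t₂ c ∧ f (t₁ c) + c = 0 ∧ f (t₂ c) + c = 0 ∧
      ∀ t ∈ Ioo (t₁ c) (t₂ c), 0 < f t + c) :
    Tendsto (fun c => ∫ t in (t₁ c)..(t₂ c), 1 / Real.sqrt (f t + c))
      (𝓝[>] (0 : ℝ)) (𝓝 (π / Real.sqrt a)) := by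
  set O := Ioo (t₀ - ε) (t₀ + ε) with hO
  have hOopen : IsOpen O := isOpen_Ioo
  have ht₀O : t₀ ∈ O := by constructor <;> linarith
  have hfd : ∀ t ∈ O, HasDerivAt f (deriv f t) t := fun t ht =>
    ((hf.differentiableOn (by norm_num)).differentiableAt (hOopen.mem_nhds ht)).hasDerivAt
  have hf' : ContDiffOn ℝ (⊤ : ℕ∞) (deriv f) O := hf.deriv_of_isOpen (m := (⊤ : ℕ∞)) hOopen (by simp)
  have hfd' : ∀ t ∈ O, HasDerivAt (deriv f) (deriv (deriv f) t) t := fun t ht =>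
    ((hf'.differentiableOn (by norm_num)).differentiableAt (hOopen.mem_nhds ht)).hasDerivAt
  have hf''c : ContinuousOn (deriv (deriv f)) O :=
    (hf'.deriv_of_isOpen (m := 0) hOopen (by simp)).continuousOn
  have hfc : ContinuousOn f O := hf.continuousOn
  -- the key quantified estimate
  have key : ∀ δ : ℝ, 0 < δ → δ < a →
      ∀ᶠ c in 𝓝[>] (0:ℝ),
        π / Real.sqrt (a + δ) ≤ (∫ t in (t₁ c)..(t₂ c), 1 / Real.sqrt (f t + c)) ∧
        (∫ t in (t₁ c)..(t₂ c), 1 / Real.sqrt (f t + c)) ≤ π / Real.sqrt (a - δ) := by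
    intro δ hδ hδa
    have haδ : 0 < a - δ := by linarith
    have haδ' : 0 < a + δ := by linarith
    -- find r
    have hc2 : ContinuousAt (deriv (deriv f)) t₀ :=
      hf''c.continuousAt (hOopen.mem_nhds ht₀O)
    have hmem : deriv (deriv f) t₀ ∈ Ioo (-2*a - 2*δ) (-2*a + 2*δ) := by
      rw [hf2]; constructor <;> linarith
    have h3 : ∀ᶠ t in 𝓝 t₀, deriv (deriv f) t ∈ Ioo (-2*a - 2*δ) (-2*a + 2*δ) :=
      hc2 (Ioo_mem_nhds hmem.1 hmem.2)
    have h4 : ∀ᶠ t in 𝓝 t₀, t ∈ O := hOopen.mem_nhds ht₀O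
    obtain ⟨r0, hr0, hball⟩ := Metric.eventually_nhds_iff_ball.mp (h4.and h3)
    set r : ℝ := r0 / 2 with hrdef
    have hr : 0 < r := by positivity
    have hIcc : ∀ t ∈ Icc (t₀ - r) (t₀ + r),
        t ∈ O ∧ deriv (deriv f) t ∈ Ioo (-2*a - 2*δ) (-2*a + 2*δ) := by
      intro t ht
      rw [mem_Icc] at ht
      refine hball t ?_
      rw [Metric.mem_ball, Real.dist_eq, abs_lt]
      constructor <;> [linarith [ht.1]; linarith [ht.2]]
    have hDO : Icc (t₀ - r) (t₀ + r) ⊆ O := fun t ht => (hIcc t ht).1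
    -- monotonicity of auxiliary functions
    have Dh₁ : ∀ t ∈ Icc (t₀ - r) (t₀ + r),
        HasDerivAt (fun u => deriv f u + 2*(a-δ)*(u - t₀))
          (deriv (deriv f) t + 2*(a-δ)) t := by
      intro t ht
      have := (hfd' t (hDO ht)).add
        (((hasDerivAt_id t).sub_const t₀).const_mul (2*(a-δ)))
      exact this.congr_deriv (by ring)
    have Dh₂ : ∀ t ∈ Icc (t₀ - r) (t₀ + r),
        HasDerivAt (fun u => deriv f u + 2*(a+δ)*(u - t₀))
          (deriv (deriv f) t + 2*(a+δ)) t := by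
      intro t ht
      have := (hfd' t (hDO ht)).add
        (((hasDerivAt_id t).sub_const t₀).const_mul (2*(a+δ)))
      exact this.congr_deriv (by ring)
    have Ah₁ : AntitoneOn (fun u => deriv f u + 2*(a-δ)*(u - t₀)) (Icc (t₀ - r) (t₀ + r)) :=
      aux_anti (convex_Icc _ _) Dh₁ (fun t ht => by
        have := (hIcc t ht).2.2; linarith)
    have Mh₂ : MonotoneOn (fun u => deriv f u + 2*(a+δ)*(u - t₀)) (Icc (t₀ - r) (t₀ + r)) :=
      aux_mono (convex_Icc _ _) Dh₂ (fun t ht => by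
        have := (hIcc t ht).2.1; linarith)
    have ht₀D : t₀ ∈ Icc (t₀ - r) (t₀ + r) := by
      rw [mem_Icc]; constructor <;> linarith
    have hslope_r : ∀ t ∈ Icc (t₀ - r) (t₀ + r), t₀ ≤ t →
        deriv f t + 2*(a-δ)*(t - t₀) ≤ 0 := by
      intro t ht h
      have := Ah₁ ht₀D ht h
      simpa [hf1] using this
    have hslope_r₂ : ∀ t ∈ Icc (t₀ - r) (t₀ + r), t₀ ≤ t →
        0 ≤ deriv f t + 2*(a+δ)*(t - t₀) := by
      intro t ht h
      have := Mh₂ ht₀D ht h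
      simpa [hf1] using this
    have hslope_l : ∀ t ∈ Icc (t₀ - r) (t₀ + r), t ≤ t₀ →
        0 ≤ deriv f t + 2*(a-δ)*(t - t₀) := by
      intro t ht h
      have := Ah₁ ht ht₀D h
      simpa [hf1] using this
    have hslope_l₂ : ∀ t ∈ Icc (t₀ - r) (t₀ + r), t ≤ t₀ →
        deriv f t + 2*(a+δ)*(t - t₀) ≤ 0 := by
      intro t ht h
      have := Mh₂ ht ht₀D h
      simpa [hf1] using this
    -- φ, ψ derivatives
    have Dφ : ∀ t ∈ Icc (t₀ - r) (t₀ + r),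
        HasDerivAt (fun u => f u + (a-δ)*(u - t₀)^2)
          (deriv f t + 2*(a-δ)*(t - t₀)) t := by
      intro t ht
      have := (hfd t (hDO ht)).add
        ((((hasDerivAt_id t).sub_const t₀).pow 2).const_mul (a-δ))
      exact this.congr_deriv (by simp; ring)
    have Dψ : ∀ t ∈ Icc (t₀ - r) (t₀ + r),
        HasDerivAt (fun u => f u + (a+δ)*(u - t₀)^2)
          (deriv f t + 2*(a+δ)*(t - t₀)) t := by
      intro t ht
      have := (hfd t (hDO ht)).add
        ((((hasDerivAt_id t).sub_const t₀).pow 2).const_mul (a+δ))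
      exact this.congr_deriv (by simp; ring)
    have hsubR : Icc t₀ (t₀ + r) ⊆ Icc (t₀ - r) (t₀ + r) :=
      Icc_subset_Icc (by linarith) le_rfl
    have hsubL : Icc (t₀ - r) t₀ ⊆ Icc (t₀ - r) (t₀ + r) :=
      Icc_subset_Icc le_rfl (by linarith)
    have AφR : AntitoneOn (fun u => f u + (a-δ)*(u - t₀)^2) (Icc t₀ (t₀ + r)) :=
      aux_anti (convex_Icc _ _) (fun t ht => Dφ t (hsubR ht))
        (fun t ht => hslope_r t (hsubR ht) ht.1)
    have MφL : MonotoneOn (fun u => f u + (a-δ)*(u - t₀)^2) (Icc (t₀ - r) t₀) :=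
      aux_mono (convex_Icc _ _) (fun t ht => Dφ t (hsubL ht))
        (fun t ht => hslope_l t (hsubL ht) ht.2)
    have MψR : MonotoneOn (fun u => f u + (a+δ)*(u - t₀)^2) (Icc t₀ (t₀ + r)) :=
      aux_mono (convex_Icc _ _) (fun t ht => Dψ t (hsubR ht))
        (fun t ht => hslope_r₂ t (hsubR ht) ht.1)
    have AψL : AntitoneOn (fun u => f u + (a+δ)*(u - t₀)^2) (Icc (t₀ - r) t₀) :=
      aux_anti (convex_Icc _ _) (fun t ht => Dψ t (hsubL ht))
        (fun t ht => hslope_l₂ t (hsubL ht) ht.2)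
    -- now the eventual estimate
    filter_upwards [hzeros, Ioo_mem_nhdsGT_of_mem
      (by constructor <;> [rfl; positivity] : (0:ℝ) ∈ Ico 0 ((a - δ) * r^2)),
      self_mem_nhdsWithin] with c hz hcI hc
    obtain ⟨ht1, ht2, hz1, hz2, hpos⟩ := hz
    replace hc : (0:ℝ) < c := hc
    have hcu : c < (a - δ) * r^2 := hcI.2
    -- localization of the zeros
    have hsq : Real.sqrt (c / (a - δ)) ≤ r := by
      rw [show r = Real.sqrt (r^2) by rw [Real.sqrt_sq hr.le]]
      apply Real.sqrt_le_sqrt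
      rw [div_le_iff₀ haδ]
      nlinarith
    have hsq0 : 0 < Real.sqrt (c / (a - δ)) := Real.sqrt_pos.2 (by positivity)
    have hsqsq : Real.sqrt (c / (a - δ)) ^ 2 = c / (a - δ) := Real.sq_sqrt (by positivity)
    have hφp₂ : f (t₀ + Real.sqrt (c / (a - δ))) + (a-δ)*((t₀ + Real.sqrt (c / (a - δ))) - t₀)^2
        ≤ f t₀ + (a-δ)*(t₀-t₀)^2 :=
      AφR ⟨le_refl t₀, by linarith⟩ ⟨by linarith, by linarith⟩ (by linarith)
    have hfp₂ : f (t₀ + Real.sqrt (c / (a - δ))) + c ≤ 0 := by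
      have e : (a-δ)*((t₀ + Real.sqrt (c / (a - δ))) - t₀)^2 = c := by
        rw [show (t₀ + Real.sqrt (c / (a - δ))) - t₀ = Real.sqrt (c / (a - δ)) by ring, hsqsq]
        field_simp
      have e0 : (t₀ - t₀)^2 = (0:ℝ) := by ring
      rw [e, e0, hf0] at hφp₂
      linarith
    have hband2 : t₂ c ≤ t₀ + Real.sqrt (c / (a - δ)) := by
      by_contra hcon
      push_neg at hcon
      have := hpos _ ⟨by linarith, hcon⟩
      linarith
    have hφp₁ : f (t₀ - Real.sqrt (c / (a - δ))) + (a-δ)*((t₀ - Real.sqrt (c / (a - δ))) - t₀)^2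
        ≤ f t₀ + (a-δ)*(t₀-t₀)^2 :=
      MφL ⟨by linarith, by linarith⟩ ⟨by linarith, le_refl t₀⟩ (by linarith)
    have hfp₁ : f (t₀ - Real.sqrt (c / (a - δ))) + c ≤ 0 := by
      have e : (a-δ)*((t₀ - Real.sqrt (c / (a - δ))) - t₀)^2 = c := by
        rw [show (t₀ - Real.sqrt (c / (a - δ))) - t₀ = -Real.sqrt (c / (a - δ)) by ring,
          neg_sq, hsqsq]
        field_simp
      have e0 : (t₀ - t₀)^2 = (0:ℝ) := by ring
      rw [e, e0, hf0] at hφp₁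
      linarith
    have hband1 : t₀ - Real.sqrt (c / (a - δ)) ≤ t₁ c := by
      by_contra hcon
      push_neg at hcon
      have := hpos _ ⟨hcon, by linarith⟩
      linarith
    have ht₂r : t₂ c ≤ t₀ + r := by linarith
    have ht₁r : t₀ - r ≤ t₁ c := by linarith
    have hβ₂pos : 0 < t₂ c - t₀ := by linarith
    have hβ₁pos : 0 < t₀ - t₁ c := by linarith
    -- pointwise bounds on the right interval
    have hB1 : ∀ t ∈ Icc t₀ (t₂ c), (a-δ)*((t₂ c - t₀)^2 - (t-t₀)^2) ≤ f t + c := by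
      intro t ht
      have h' : f (t₂ c) + (a-δ)*(t₂ c - t₀)^2 ≤ f t + (a-δ)*(t - t₀)^2 :=
        AφR ⟨ht.1, by linarith [ht.2]⟩ ⟨by linarith, by linarith⟩ ht.2
      have hft₂ : f (t₂ c) = -c := by linarith
      rw [hft₂] at h'
      nlinarith [h']
    have hB2 : ∀ t ∈ Icc t₀ (t₂ c), f t + c ≤ (a+δ)*((t₂ c - t₀)^2 - (t-t₀)^2) := by
      intro t ht
      have h' : f t + (a+δ)*(t - t₀)^2 ≤ f (t₂ c) + (a+δ)*(t₂ c - t₀)^2 :=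
        MψR ⟨ht.1, by linarith [ht.2]⟩ ⟨by linarith, by linarith⟩ ht.2
      have hft₂ : f (t₂ c) = -c := by linarith
      rw [hft₂] at h'
      nlinarith [h']
    -- pointwise bounds on the left interval (stated with (t₀ - t₁ c)^2)
    have hB1L : ∀ t ∈ Icc (t₁ c) t₀, (a-δ)*((t₀ - t₁ c)^2 - (t-t₀)^2) ≤ f t + c := by
      intro t ht
      have h' : f (t₁ c) + (a-δ)*(t₁ c - t₀)^2 ≤ f t + (a-δ)*(t - t₀)^2 :=
        MφL ⟨by linarith, by linarith⟩ ⟨by linarith [ht.1], ht.2⟩ ht.1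
      have hft₁ : f (t₁ c) = -c := by linarith
      rw [hft₁] at h'
      nlinarith [h']
    have hB2L : ∀ t ∈ Icc (t₁ c) t₀, f t + c ≤ (a+δ)*((t₀ - t₁ c)^2 - (t-t₀)^2) := by
      intro t ht
      have h' : f t + (a+δ)*(t - t₀)^2 ≤ f (t₁ c) + (a+δ)*(t₁ c - t₀)^2 :=
        AψL ⟨by linarith, by linarith⟩ ⟨by linarith [ht.1], ht.2⟩ ht.1
      have hft₁ : f (t₁ c) = -c := by linarith
      rw [hft₁] at h'
      nlinarith [h']
    -- pointwise integrand bounds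
    have hub₂ : ∀ t ∈ Icc t₀ (t₂ c),
        1 / Real.sqrt (f t + c)
          ≤ 1 / Real.sqrt ((a-δ)*((t₂ c - t₀)^2 - (t-t₀)^2)) := by
      intro t ht
      rcases eq_or_lt_of_le ht.2 with he | hlt
      · subst he; simp [hz2]
      · have hq : 0 < (a-δ)*((t₂ c - t₀)^2 - (t-t₀)^2) := by
          apply mul_pos haδ
          nlinarith [ht.1]
        exact one_div_le_one_div_of_le (Real.sqrt_pos.2 hq) (Real.sqrt_le_sqrt (hB1 t ht))
    have hlb₂ : ∀ t ∈ Icc t₀ (t₂ c),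
        1 / Real.sqrt ((a+δ)*((t₂ c - t₀)^2 - (t-t₀)^2))
          ≤ 1 / Real.sqrt (f t + c) := by
      intro t ht
      rcases eq_or_lt_of_le ht.2 with he | hlt
      · subst he; simp [hz2]
      · have hft : 0 < f t + c := hpos t ⟨lt_of_lt_of_le ht1 ht.1, hlt⟩
        exact one_div_le_one_div_of_le (Real.sqrt_pos.2 hft) (Real.sqrt_le_sqrt (hB2 t ht))
    have hub₁ : ∀ t ∈ Icc (t₁ c) t₀,
        1 / Real.sqrt (f t + c)
          ≤ 1 / Real.sqrt ((a-δ)*((t₀ - t₁ c)^2 - (t-t₀)^2)) := by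
      intro t ht
      rcases eq_or_lt_of_le ht.1 with he | hlt
      · rw [← he]
        have e : ((t₀ - t₁ c)^2 - (t₁ c - t₀)^2) = 0 := by ring
        simp [hz1, e]
      · have hq : 0 < (a-δ)*((t₀ - t₁ c)^2 - (t-t₀)^2) := by
          apply mul_pos haδ
          nlinarith [ht.2]
        exact one_div_le_one_div_of_le (Real.sqrt_pos.2 hq) (Real.sqrt_le_sqrt (hB1L t ht))
    have hlb₁ : ∀ t ∈ Icc (t₁ c) t₀,
        1 / Real.sqrt ((a+δ)*((t₀ - t₁ c)^2 - (t-t₀)^2))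
          ≤ 1 / Real.sqrt (f t + c) := by
      intro t ht
      rcases eq_or_lt_of_le ht.1 with he | hlt
      · rw [← he]
        have e : ((t₀ - t₁ c)^2 - (t₁ c - t₀)^2) = 0 := by ring
        simp [hz1, e]
      · have hft : 0 < f t + c := hpos t ⟨hlt, lt_of_le_of_lt ht.2 ht2⟩
        exact one_div_le_one_div_of_le (Real.sqrt_pos.2 hft) (Real.sqrt_le_sqrt (hB2L t ht))
    -- measurability helper
    have hmeas : ∀ u v : ℝ, Set.uIoc u v ⊆ O →
        AEStronglyMeasurable (fun t => 1 / Real.sqrt (f t + c))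
          (volume.restrict (Set.uIoc u v)) := by
      intro u v huv
      have hfm : AEMeasurable f (volume.restrict (Set.uIoc u v)) :=
        (hfc.mono huv).aemeasurable measurableSet_uIoc
      exact (aux_meas.comp_aemeasurable (hfm.add_const c)).aestronglyMeasurable
    have hsub₂ : Set.uIoc t₀ (t₂ c) ⊆ O := by
      rw [uIoc_of_le ht2.le]
      intro x hx
      exact hDO ⟨by linarith [hx.1.le], by linarith [hx.2]⟩
    have hsub₁ : Set.uIoc (t₁ c) t₀ ⊆ O := by
      rw [uIoc_of_le ht1.le]
      intro x hx
      exact hDO ⟨by linarith [hx.1.le], by linarith [hx.2]⟩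
    -- comparison integrability and integrals, right side
    have e2 : t₀ + (t₂ c - t₀) = t₂ c := by ring
    have e1 : t₀ - (t₀ - t₁ c) = t₁ c := by ring
    have hiiU₂ := aux_ii_right_scaled haδ hβ₂pos t₀
    rw [e2] at hiiU₂
    have hiiL₂ := aux_ii_right_scaled haδ' hβ₂pos t₀
    rw [e2] at hiiL₂
    have hiiU₁ := aux_ii_left_scaled haδ hβ₁pos t₀
    rw [e1] at hiiU₁
    have hiiL₁ := aux_ii_left_scaled haδ' hβ₁pos t₀
    rw [e1] at hiiL₁
    have hii₂ : IntervalIntegrable (fun t => 1 / Real.sqrt (f t + c)) volume t₀ (t₂ c) := by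
      refine hiiU₂.mono_fun (hmeas _ _ hsub₂) ?_
      filter_upwards [MeasureTheory.ae_restrict_mem measurableSet_uIoc] with x hx
      rw [uIoc_of_le ht2.le] at hx
      rw [Real.norm_eq_abs, Real.norm_eq_abs, abs_of_nonneg (by positivity),
        abs_of_nonneg (by positivity)]
      exact hub₂ x ⟨hx.1.le, hx.2⟩
    have hii₁ : IntervalIntegrable (fun t => 1 / Real.sqrt (f t + c)) volume (t₁ c) t₀ := by
      refine hiiU₁.mono_fun (hmeas _ _ hsub₁) ?_
      filter_upwards [MeasureTheory.ae_restrict_mem measurableSet_uIoc] with x hx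
      rw [uIoc_of_le ht1.le] at hx
      rw [Real.norm_eq_abs, Real.norm_eq_abs, abs_of_nonneg (by positivity),
        abs_of_nonneg (by positivity)]
      exact hub₁ x ⟨hx.1.le, hx.2⟩
    have hIU₂ := aux_int_right_scaled haδ hβ₂pos t₀
    rw [e2] at hIU₂
    have hIL₂ := aux_int_right_scaled haδ' hβ₂pos t₀
    rw [e2] at hIL₂
    have hIU₁ := aux_int_left_scaled haδ hβ₁pos t₀
    rw [e1] at hIU₁
    have hIL₁ := aux_int_left_scaled haδ' hβ₁pos t₀
    rw [e1] at hIL₁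
    have hR_ub : (∫ t in t₀..(t₂ c), 1 / Real.sqrt (f t + c)) ≤ π / (2 * Real.sqrt (a - δ)) := by
      rw [← hIU₂]
      exact intervalIntegral.integral_mono_on ht2.le hii₂ hiiU₂ hub₂
    have hR_lb : π / (2 * Real.sqrt (a + δ)) ≤ ∫ t in t₀..(t₂ c), 1 / Real.sqrt (f t + c) := by
      rw [← hIL₂]
      exact intervalIntegral.integral_mono_on ht2.le hiiL₂ hii₂ hlb₂
    have hL_ub : (∫ t in (t₁ c)..t₀, 1 / Real.sqrt (f t + c)) ≤ π / (2 * Real.sqrt (a - δ)) := by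
      rw [← hIU₁]
      exact intervalIntegral.integral_mono_on ht1.le hii₁ hiiU₁ hub₁
    have hL_lb : π / (2 * Real.sqrt (a + δ)) ≤ ∫ t in (t₁ c)..t₀, 1 / Real.sqrt (f t + c) := by
      rw [← hIL₁]
      exact intervalIntegral.integral_mono_on ht1.le hiiL₁ hii₁ hlb₁
    have hsplit := intervalIntegral.integral_add_adjacent_intervals hii₁ hii₂
    have hplus : π / Real.sqrt (a + δ)
        = π / (2 * Real.sqrt (a + δ)) + π / (2 * Real.sqrt (a + δ)) := by ring
    have hminus : π / Real.sqrt (a - δ)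
        = π / (2 * Real.sqrt (a - δ)) + π / (2 * Real.sqrt (a - δ)) := by ring
    constructor
    · rw [← hsplit, hplus]; exact add_le_add hL_lb hR_lb
    · rw [← hsplit, hminus]; exact add_le_add hL_ub hR_ub
    -- squeeze
  rw [Metric.tendsto_nhds]
  intro ε' hε'
  have hcp : Tendsto (fun d : ℝ => π / Real.sqrt (a + d)) (𝓝 0) (𝓝 (π / Real.sqrt a)) := by
    have : ContinuousAt (fun d : ℝ => π / Real.sqrt (a + d)) 0 := by
      apply ContinuousAt.div continuousAt_const
      · exact Real.continuous_sqrt.continuousAt.comp (continuousAt_const.add continuousAt_id)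
      · simp only [add_zero]
        positivity
    simpa using this.tendsto
  have hcm : Tendsto (fun d : ℝ => π / Real.sqrt (a - d)) (𝓝 0) (𝓝 (π / Real.sqrt a)) := by
    have : ContinuousAt (fun d : ℝ => π / Real.sqrt (a - d)) 0 := by
      apply ContinuousAt.div continuousAt_const
      · exact Real.continuous_sqrt.continuousAt.comp (continuousAt_const.sub continuousAt_id)
      · simp only [sub_zero]
        positivity
    simpa using this.tendsto
  have ep := (Metric.tendsto_nhds.mp hcp) ε' hε'
  have em := (Metric.tendsto_nhds.mp hcm) ε' hε'
  have hev : ∀ᶠ d in 𝓝[>] (0:ℝ),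
      (dist (π / Real.sqrt (a + d)) (π / Real.sqrt a) < ε' ∧
       dist (π / Real.sqrt (a - d)) (π / Real.sqrt a) < ε') ∧ d ∈ Ioo (0:ℝ) a := by
    filter_upwards [(ep.and em).filter_mono nhdsWithin_le_nhds,
      Ioo_mem_nhdsGT_of_mem (⟨le_refl 0, ha⟩ : (0:ℝ) ∈ Ico 0 a)] with d h1 h2
    exact ⟨h1, h2⟩
  obtain ⟨δ, ⟨hdp, hdm⟩, hδ0, hδa⟩ := hev.exists
  filter_upwards [key δ hδ0 hδa] with c hcb
  rw [Real.dist_eq] at hdp hdm ⊢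
  rw [abs_lt]
  have l1 := (abs_lt.mp hdp).1
  have l2 := (abs_lt.mp hdm).2
  exact ⟨by linarith [hcb.1], by linarith [hcb.2]⟩
end

section
/- Let f(z) = 4mN/√(z² + r₀²) with m, N, r₀ > 0. Then lim_{c → (-4mN/r₀)⁺} ∫_{-t₁(c)}^{t₁(c)} dz/√(f(z)+c) = π √(r₀³/(2mN)), where t₁(c) = √(16m²N²/c² − r₀²). -/
open Real Filter Set Topology intervalIntegral

/-!
Put `a = 4mN` and `S = a / (-c)`, so that `c = -a / S` and `t₁ = √(S² - r₀²)`. The substitution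
`z = t₁ sin θ` removes the singularities of the integrand at `±t₁`: it becomes `√(S u (S + u) / a)`
with `u = √(z² + r₀²) ∈ [r₀, S]`, so the integral lies between `π √(2r₀³/a)` and `π √(2S³/a)`.
As `c → (-a/r₀)⁺` we have `S → r₀⁺`, and the two bounds squeeze the integral to `π √(2r₀³/a)`.
-/

lemma image_mul_sin_Ioo {T : ℝ} (hT : 0 < T) :
    (fun θ => T * sin θ) '' Ioo (-(π / 2)) (π / 2) = Ioo (-T) T := by
  have hsin : sin '' Ioo (-(π / 2)) (π / 2) = Ioo (-1) 1 :=
    sinPartialHomeomorph.image_source_eq_target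
  rw [show (fun θ => T * sin θ) = (T * ·) ∘ sin from rfl, image_comp, hsin]
  simpa using image_mul_left_Ioo hT (-1) 1

lemma div_sqrt_div_sub_div_eq_sqrt {a u S w : ℝ} (ha : 0 < a) (hu : 0 < u) (hS : 0 < S)
    (hw : 0 < w) (hwuS : w ^ 2 + u ^ 2 = S ^ 2) :
    w / √(a / u - a / S) = √(S * u * (S + u) / a) := by
  have hquot : a / u - a / S = w ^ 2 / (S * u * (S + u) / a) := by
    field_simp
    linear_combination -hwuS
  rw [hquot, sqrt_div' _ (by positivity), sqrt_sq hw.le, div_div_cancel₀ hw.ne']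

lemma two_mul_cube_le_mul_mul_add_le {R : Type*} [CommRing R] [LinearOrder R]
    [IsStrictOrderedRing R] {r u S : R} (hr : 0 ≤ r) (hru : r ≤ u) (huS : u ≤ S) :
    2 * r ^ 3 ≤ S * u * (S + u) ∧ S * u * (S + u) ≤ 2 * S ^ 3 := by
  have hu := hr.trans hru
  constructor <;> nlinarith [mul_le_mul (hru.trans huS) hru hr (hu.trans huS),
    mul_le_mul huS huS hu (hu.trans huS), mul_nonneg hr hr]

section

variable {a r₀ S T : ℝ}

theorem integral_one_div_sqrt_eq_integral_sin (ha : 0 < a) (hr₀ : 0 < r₀) (hS : 0 < S)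
    (hT : 0 < T) (hTS : T ^ 2 + r₀ ^ 2 = S ^ 2) :
    ∫ z in -T..T, 1 / √(a / √(z ^ 2 + r₀ ^ 2) - a / S) =
      ∫ θ in -(π / 2)..π / 2,
        √(S * √((T * sin θ) ^ 2 + r₀ ^ 2) * (S + √((T * sin θ) ^ 2 + r₀ ^ 2)) / a) := by
  rw [integral_of_le (by linarith), integral_of_le (by linarith [pi_pos]),
    MeasureTheory.integral_Ioc_eq_integral_Ioo, MeasureTheory.integral_Ioc_eq_integral_Ioo,
    ← image_mul_sin_Ioo hT,
    MeasureTheory.integral_image_eq_integral_abs_deriv_smul measurableSet_Ioo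
      (fun θ _ => ((hasDerivAt_sin θ).const_mul T).hasDerivWithinAt)
      ((mul_right_injective₀ hT.ne').comp_injOn (Real.injOn_sin.mono Ioo_subset_Icc_self))]
  refine MeasureTheory.setIntegral_congr_fun measurableSet_Ioo fun θ hθ => ?_
  have hw : 0 < T * cos θ := mul_pos hT (cos_pos_of_mem_Ioo hθ)
  have hu2 : √((T * sin θ) ^ 2 + r₀ ^ 2) ^ 2 = (T * sin θ) ^ 2 + r₀ ^ 2 := sq_sqrt (by positivity)
  simp only [mul_one, abs_of_pos hw, smul_eq_mul, ← mul_div_assoc]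
  exact div_sqrt_div_sub_div_eq_sqrt ha (by positivity) hS hw
    (by linear_combination hu2 + hTS + T ^ 2 * sin_sq_add_cos_sq θ)

theorem integral_one_div_sqrt_mem_Icc (ha : 0 < a) (hr₀ : 0 < r₀) (hS : 0 < S)
    (hT : 0 < T) (hTS : T ^ 2 + r₀ ^ 2 = S ^ 2) :
    ∫ z in -T..T, 1 / √(a / √(z ^ 2 + r₀ ^ 2) - a / S) ∈
      Icc (π * √(2 * r₀ ^ 3 / a)) (π * √(2 * S ^ 3 / a)) := by
  rw [integral_one_div_sqrt_eq_integral_sin ha hr₀ hS hT hTS]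
  set u : ℝ → ℝ := fun θ => √((T * sin θ) ^ 2 + r₀ ^ 2)
  have hu : ∀ θ, r₀ ≤ u θ ∧ u θ ≤ S := fun θ => by
    refine ⟨le_sqrt_of_sq_le (by nlinarith), (sqrt_le_left hS.le).2 ?_⟩
    nlinarith [sin_sq_le_one θ]
  have hbound : ∀ θ, √(2 * r₀ ^ 3 / a) ≤ √(S * u θ * (S + u θ) / a) ∧
      √(S * u θ * (S + u θ) / a) ≤ √(2 * S ^ 3 / a) := fun θ => by
    obtain ⟨hlo, hhi⟩ := two_mul_cube_le_mul_mul_add_le hr₀.le (hu θ).1 (hu θ).2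
    exact ⟨sqrt_le_sqrt (by gcongr), sqrt_le_sqrt (by gcongr)⟩
  have hint : IntervalIntegrable (fun θ => √(S * u θ * (S + u θ) / a)) MeasureTheory.volume
      (-(π / 2)) (π / 2) := Continuous.intervalIntegrable (by fun_prop) _ _
  have hπ : -(π / 2) ≤ π / 2 := by linarith [pi_pos]
  have hconst : ∀ y : ℝ, ∫ _ in -(π / 2)..π / 2, y = π * y := fun y => by
    rw [integral_const, smul_eq_mul]; ring
  constructor
  · rw [← hconst]
    exact integral_mono_on hπ intervalIntegrable_const hint fun θ _ => (hbound θ).1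
  · rw [← hconst]
    exact integral_mono_on hπ hint intervalIntegrable_const fun θ _ => (hbound θ).2

theorem tendsto_integral_one_div_sqrt_nhdsGT (ha : 0 < a) (hr₀ : 0 < r₀) :
    Tendsto (fun S => ∫ z in -√(S ^ 2 - r₀ ^ 2)..√(S ^ 2 - r₀ ^ 2),
        1 / √(a / √(z ^ 2 + r₀ ^ 2) - a / S)) (𝓝[>] r₀) (𝓝 (π * √(2 * r₀ ^ 3 / a))) := by
  have hupper : Tendsto (fun S => π * √(2 * S ^ 3 / a)) (𝓝[>] r₀) (𝓝 (π * √(2 * r₀ ^ 3 / a))) :=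
    ((by fun_prop : Continuous fun S => π * √(2 * S ^ 3 / a)).tendsto r₀).mono_left
      nhdsWithin_le_nhds
  have hbounds : ∀ᶠ S in 𝓝[>] r₀, ∫ z in -√(S ^ 2 - r₀ ^ 2)..√(S ^ 2 - r₀ ^ 2),
      1 / √(a / √(z ^ 2 + r₀ ^ 2) - a / S) ∈ Icc (π * √(2 * r₀ ^ 3 / a)) (π * √(2 * S ^ 3 / a)) := by
    filter_upwards [self_mem_nhdsWithin] with S (hS : r₀ < S)
    have hS₀ : 0 < S := hr₀.trans hS
    exact integral_one_div_sqrt_mem_Icc ha hr₀ hS₀ (sqrt_pos.2 (by nlinarith))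
      (by rw [sq_sqrt (by nlinarith)]; ring)
  exact tendsto_of_tendsto_of_tendsto_of_le_of_le' tendsto_const_nhds hupper
    (hbounds.mono fun _ h => h.1) (hbounds.mono fun _ h => h.2)

end

theorem limit_period_at_center
    (m N r₀ : ℝ) (hm : 0 < m) (hN : 0 < N) (hr₀ : 0 < r₀)
    (t₁ : ℝ → ℝ)
    (ht₁ : ∀ c, t₁ c = Real.sqrt (16 * m ^ 2 * N ^ 2 / c ^ 2 - r₀ ^ 2)) :
    Tendsto (fun c => ∫ z in (-(t₁ c))..(t₁ c),
        1 / Real.sqrt (4 * m * N / Real.sqrt (z ^ 2 + r₀ ^ 2) + c))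
      (𝓝[>] (-4 * m * N / r₀))
      (𝓝 (π * Real.sqrt (r₀ ^ 3 / (2 * m * N)))) := by
  set a := 4 * m * N
  have ha : 0 < a := by positivity
  have hlimit : r₀ ^ 3 / (2 * m * N) = 2 * r₀ ^ 3 / a := by field_simp; ring
  rw [hlimit, show -4 * m * N / r₀ = -a / r₀ by ring]
  have hsub : ∀ᶠ c in 𝓝[>] (-a / r₀), c ∈ Ioo (-a / r₀) 0 :=
    Ioo_mem_nhdsGT (div_neg_of_neg_of_pos (neg_neg_of_pos ha) hr₀)
  have hS : Tendsto (fun c => a / -c) (𝓝[>] (-a / r₀)) (𝓝[>] r₀) := by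
    refine tendsto_nhdsWithin_iff.2 ⟨?_, hsub.mono fun c hc => ?_⟩
    · have hcont : ContinuousAt (fun c => a / -c) (-a / r₀) :=
        continuousAt_const.div continuousAt_neg (by field_simp; positivity)
      convert hcont.tendsto.mono_left nhdsWithin_le_nhds using 2
      field_simp
    · have hcr := (div_lt_iff₀ hr₀).1 hc.1
      exact (lt_div_iff₀ (neg_pos.2 hc.2)).2 (by nlinarith)
  refine Tendsto.congr' ?_ ((tendsto_integral_one_div_sqrt_nhdsGT ha hr₀).comp hS)
  filter_upwards [hsub] with c hc
  have hc₀ : c ≠ 0 := hc.2.ne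
  have ht : 16 * m ^ 2 * N ^ 2 / c ^ 2 = (a / -c) ^ 2 := by field_simp; ring
  have hac : a / (a / -c) = -c := by field_simp
  simp only [Function.comp_apply, ht₁, ht, hac, sub_neg_eq_add]
end
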